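/- The EJM basis is the orbit of its first state under the group G^{(2)}_tetra = ⟨X⊗X, Z⊗Z⟩ up to global phases: for each of the four operators U ∈ {I⊗I, X⊗X, Z⊗Z, (XZ)⊗(XZ)} there exist an index i ∈ {1,2,3,4} and a complex number ω with |ω| = 1 such that U ψ_1 = ω ψ_i, and the resulting map U ↦ i is a bijection onto {1,2,3,4}. -/

import Mathlib

open Matrix Complex Kronecker

noncomputable section

def X2 : Matrix (Fin 2) (Fin 2) ℂ := !![0, 1; 1, 0]
def Y2 : Matrix (Fin 2) (Fin 2) ℂ := !![0, -Complex.I; Complex.I, 0]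
def Z2 : Matrix (Fin 2) (Fin 2) ℂ := !![1, 0; 0, -1]

/-- The tetrahedral Bloch vectors `m₁, m₂, m₃, m₄` (0-indexed). -/
def mtet : Fin 4 → Fin 3 → ℝ := fun i j =>
  (![![1, 1, 1], ![1, -1, -1], ![-1, 1, -1], ![-1, -1, 1]] : Fin 4 → Fin 3 → ℝ) i j /
    Real.sqrt 3

def bTheta (m : Fin 3 → ℝ) : ℝ := Real.arccos (m 2)
def bPhi (m : Fin 3 → ℝ) : ℝ := Complex.arg ((m 0 : ℂ) + (m 1 : ℂ) * Complex.I)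

/-- `|m⟩ = cos(θ/2)|0⟩ + sin(θ/2) e^{iφ} |1⟩`. -/
def ketP (m : Fin 3 → ℝ) : Fin 2 → ℂ :=
  ![(Real.cos (bTheta m / 2) : ℂ),
    (Real.sin (bTheta m / 2) : ℂ) * Complex.exp ((bPhi m : ℂ) * Complex.I)]

/-- `|−m⟩ = sin(θ/2)|0⟩ − cos(θ/2) e^{iφ} |1⟩`. -/
def ketM (m : Fin 3 → ℝ) : Fin 2 → ℂ :=
  ![(Real.sin (bTheta m / 2) : ℂ),
    -((Real.cos (bTheta m / 2) : ℂ)) * Complex.exp ((bPhi m : ℂ) * Complex.I)]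

/-- Tensor product of two qubit vectors. -/
def tp (u w : Fin 2 → ℂ) : Fin 2 × Fin 2 → ℂ := fun p => u p.1 * w p.2

/-- The EJM basis states `ψ_1, …, ψ_4` (0-indexed). -/
def ψEJM (i : Fin 4) : Fin 2 × Fin 2 → ℂ :=
  (((Real.sqrt 3 + 1) / (2 * Real.sqrt 2) : ℝ) : ℂ) • tp (ketP (mtet i)) (ketM (mtet i)) +
    (((Real.sqrt 3 - 1) / (2 * Real.sqrt 2) : ℝ) : ℂ) • tp (ketM (mtet i)) (ketP (mtet i))

/-- Inner product on `ℂ² ⊗ ℂ²` (conjugate-linear in the first argument). -/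
def ip2 (v w : Fin 2 × Fin 2 → ℂ) : ℂ := ∑ p, star (v p) * w p

/-- `m·σ = m_x X + m_y Y + m_z Z`. -/
def mDotSigma (m : Fin 3 → ℝ) : Matrix (Fin 2) (Fin 2) ℂ :=
  (m 0 : ℂ) • X2 + (m 1 : ℂ) • Y2 + (m 2 : ℂ) • Z2

end

noncomputable section

/-- The four elements `I⊗I, X⊗X, Z⊗Z, (XZ)⊗(XZ)` of `G⁽²⁾_tetra = ⟨X⊗X, Z⊗Z⟩`. -/
def Gtetra2elt : Fin 4 → Matrix (Fin 2 × Fin 2) (Fin 2 × Fin 2) ℂ :=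
  ![(1 : Matrix (Fin 2) (Fin 2) ℂ) ⊗ₖ (1 : Matrix (Fin 2) (Fin 2) ℂ),
    X2 ⊗ₖ X2, Z2 ⊗ₖ Z2, (X2 * Z2) ⊗ₖ (X2 * Z2)]

/-!
`X` and `Z` act on the Bloch sphere as the half-turns about the `x`- and `z`-axes, and these
half-turns permute the tetrahedron: `R_x m₁ = m₂`, `R_z m₁ = m₄`, `R_x m₄ = m₃`. On kets a
half-turn `U` sends `|m⟩` and `|−m⟩` to `α |Rm⟩` and `β |−Rm⟩`, with phases depending only on
`m`, so `U ⊗ U` multiplies both terms of `ψ_i` by the same phase `αβ` and maps `ψ_i` to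
`αβ ψ_j`. The element `XZ ⊗ XZ` is the composite of `Z ⊗ Z` and `X ⊗ X`.
-/

open ComplexConjugate

def halfTurnX (m : Fin 3 → ℝ) : Fin 3 → ℝ := ![m 0, -m 1, -m 2]

def halfTurnZ (m : Fin 3 → ℝ) : Fin 3 → ℝ := ![-m 0, -m 1, m 2]

lemma bTheta_halfTurnX (m : Fin 3 → ℝ) : bTheta (halfTurnX m) = Real.pi - bTheta m := by
  simp [bTheta, halfTurnX, Real.arccos_neg]

lemma bTheta_halfTurnZ (m : Fin 3 → ℝ) : bTheta (halfTurnZ m) = bTheta m := by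
  simp [bTheta, halfTurnZ]

lemma exp_bPhi_halfTurnX (m : Fin 3 → ℝ) :
    exp (bPhi (halfTurnX m) * I) = conj (exp (bPhi m * I)) := by
  have hxy : ((halfTurnX m 0 : ℝ) : ℂ) + (halfTurnX m 1 : ℝ) * I = conj ((m 0 : ℂ) + m 1 * I) := by
    simp [halfTurnX]
  rw [bPhi, hxy, arg_conj, show arg ((m 0 : ℂ) + m 1 * I) = bPhi m from rfl]
  split_ifs with h
  · rw [h, exp_pi_mul_I]; simp
  · rw [← Complex.exp_conj, map_mul, conj_ofReal, conj_I]; push_cast; ring_nf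

-- `arg 0 = 0`, so over the poles the phase does not flip.
lemma exp_bPhi_halfTurnZ {m : Fin 3 → ℝ} (hm : (m 0 : ℂ) + m 1 * I ≠ 0) :
    exp (bPhi (halfTurnZ m) * I) = -exp (bPhi m * I) := by
  set w : ℂ := m 0 + m 1 * I
  have hxy : ((halfTurnZ m 0 : ℝ) : ℂ) + (halfTurnZ m 1 : ℝ) * I = -w := by
    simp only [halfTurnZ, w, cons_val_zero, cons_val_one, ofReal_neg]; ring
  rw [bPhi, hxy]
  refine mul_left_cancel₀ (ofReal_ne_zero.mpr (norm_ne_zero_iff.mpr hm)) ?_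
  calc (‖w‖ : ℂ) * exp (arg (-w) * I) = -w := by simpa using norm_mul_exp_arg_mul_I (-w)
    _ = ‖w‖ * -exp (bPhi m * I) := by rw [mul_neg, bPhi, norm_mul_exp_arg_mul_I]

lemma cos_pi_sub_div_two (θ : ℝ) : Real.cos ((Real.pi - θ) / 2) = Real.sin (θ / 2) := by
  rw [sub_div, Real.cos_pi_div_two_sub]

lemma sin_pi_sub_div_two (θ : ℝ) : Real.sin ((Real.pi - θ) / 2) = Real.cos (θ / 2) := by
  rw [sub_div, Real.sin_pi_div_two_sub]

lemma exp_mul_I_mul_conj (φ : ℝ) : exp (φ * I) * conj (exp (φ * I)) = 1 := by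
  rw [mul_conj, normSq_eq_norm_sq, norm_exp_ofReal_mul_I]; norm_num

lemma X2_mulVec_vec2 (a b : ℂ) : X2 *ᵥ ![a, b] = ![b, a] := by
  ext k; fin_cases k <;> simp [X2]

lemma Z2_mulVec_vec2 (a b : ℂ) : Z2 *ᵥ ![a, b] = ![a, -b] := by
  ext k; fin_cases k <;> simp [Z2]

lemma X2_mulVec_ketP (m : Fin 3 → ℝ) :
    X2 *ᵥ ketP m = exp (bPhi m * I) • ketP (halfTurnX m) := by
  have he := exp_mul_I_mul_conj (bPhi m)
  rw [ketP, ketP, bTheta_halfTurnX, exp_bPhi_halfTurnX, cos_pi_sub_div_two, sin_pi_sub_div_two,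
    X2_mulVec_vec2, smul_vec2]
  exact vec2_eq (by ring) (by linear_combination -(Real.cos (bTheta m / 2) : ℂ) * he)

lemma X2_mulVec_ketM (m : Fin 3 → ℝ) :
    X2 *ᵥ ketM m = -exp (bPhi m * I) • ketM (halfTurnX m) := by
  have he := exp_mul_I_mul_conj (bPhi m)
  rw [ketM, ketM, bTheta_halfTurnX, exp_bPhi_halfTurnX, cos_pi_sub_div_two, sin_pi_sub_div_two,
    X2_mulVec_vec2, smul_vec2]
  exact vec2_eq (by ring) (by linear_combination -(Real.sin (bTheta m / 2) : ℂ) * he)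

lemma Z2_mulVec_ketP {m : Fin 3 → ℝ} (hm : (m 0 : ℂ) + m 1 * I ≠ 0) :
    Z2 *ᵥ ketP m = ketP (halfTurnZ m) := by
  rw [ketP, ketP, bTheta_halfTurnZ, exp_bPhi_halfTurnZ hm, Z2_mulVec_vec2]
  exact vec2_eq rfl (by ring)

lemma Z2_mulVec_ketM {m : Fin 3 → ℝ} (hm : (m 0 : ℂ) + m 1 * I ≠ 0) :
    Z2 *ᵥ ketM m = ketM (halfTurnZ m) := by
  rw [ketM, ketM, bTheta_halfTurnZ, exp_bPhi_halfTurnZ hm, Z2_mulVec_vec2]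
  exact vec2_eq rfl (by ring)

lemma kronecker_mulVec_tp (A B : Matrix (Fin 2) (Fin 2) ℂ) (u w : Fin 2 → ℂ) :
    (A ⊗ₖ B) *ᵥ tp u w = tp (A *ᵥ u) (B *ᵥ w) := by
  ext ⟨i, j⟩
  simp only [tp, mulVec, dotProduct, Fintype.sum_prod_type, kroneckerMap_apply, Finset.sum_mul_sum]
  exact Finset.sum_congr rfl fun _ _ => Finset.sum_congr rfl fun _ _ => by ring

lemma tp_smul_smul (α β : ℂ) (u w : Fin 2 → ℂ) : tp (α • u) (β • w) = (α * β) • tp u w := by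
  ext p; simp only [tp, Pi.smul_apply, smul_eq_mul]; ring

lemma kronecker_self_mulVec_ψEJM (A : Matrix (Fin 2) (Fin 2) ℂ) {i j : Fin 4} {α β : ℂ}
    (hP : A *ᵥ ketP (mtet i) = α • ketP (mtet j)) (hM : A *ᵥ ketM (mtet i) = β • ketM (mtet j)) :
    (A ⊗ₖ A) *ᵥ ψEJM i = (α * β) • ψEJM j := by
  rw [ψEJM, ψEJM, mulVec_add, mulVec_smul, mulVec_smul, kronecker_mulVec_tp, kronecker_mulVec_tp,
    hP, hM, tp_smul_smul, tp_smul_smul, mul_comm β α, smul_add, smul_comm (α * β), smul_comm (α * β)]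

lemma X2_kronecker_X2_mulVec_ψEJM {i j : Fin 4} (hij : halfTurnX (mtet i) = mtet j) :
    (X2 ⊗ₖ X2) *ᵥ ψEJM i = (exp (bPhi (mtet i) * I) * -exp (bPhi (mtet i) * I)) • ψEJM j :=
  kronecker_self_mulVec_ψEJM X2 (hij ▸ X2_mulVec_ketP _) (hij ▸ X2_mulVec_ketM _)

lemma Z2_kronecker_Z2_mulVec_ψEJM {i j : Fin 4} (hi : (mtet i 0 : ℂ) + mtet i 1 * I ≠ 0)
    (hij : halfTurnZ (mtet i) = mtet j) : (Z2 ⊗ₖ Z2) *ᵥ ψEJM i = ψEJM j := by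
  simpa using kronecker_self_mulVec_ψEJM (α := 1) (β := 1) Z2
    (by rw [one_smul, ← hij, Z2_mulVec_ketP hi]) (by rw [one_smul, ← hij, Z2_mulVec_ketM hi])

lemma halfTurnX_mtet_zero : halfTurnX (mtet 0) = mtet 1 := by
  ext k; fin_cases k <;> simp [halfTurnX, mtet, neg_div]

lemma halfTurnX_mtet_three : halfTurnX (mtet 3) = mtet 2 := by
  ext k; fin_cases k <;> simp [halfTurnX, mtet, neg_div]

lemma halfTurnZ_mtet_zero : halfTurnZ (mtet 0) = mtet 3 := by
  ext k; fin_cases k <;> simp [halfTurnZ, mtet, neg_div]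

lemma mtet_zero_xy_ne_zero : (mtet 0 0 : ℂ) + mtet 0 1 * I ≠ 0 := fun h => by
  simpa [mtet] using congrArg re h

lemma norm_phase_mul_neg_phase (φ : ℝ) : ‖exp (φ * I) * -exp (φ * I)‖ = 1 := by
  rw [norm_mul, norm_neg, norm_exp_ofReal_mul_I, one_mul]

/-- The EJM basis is the orbit of `ψ_1` under `G⁽²⁾_tetra` up to
global phases: each `U ∈ {I⊗I, X⊗X, Z⊗Z, (XZ)⊗(XZ)}` sends `ψ_1` to a unimodular
multiple of some `ψ_i`, and the assignment `U ↦ i` is a bijection. -/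
theorem EJM_is_Gtetra_orbit :
    ∃ f : Fin 4 → Fin 4, Function.Bijective f ∧
      ∀ u : Fin 4, ∃ ω : ℂ, ‖ω‖ = 1 ∧
        (Gtetra2elt u).mulVec (ψEJM 0) = ω • ψEJM (f u) := by
  have hZ := Z2_kronecker_Z2_mulVec_ψEJM mtet_zero_xy_ne_zero halfTurnZ_mtet_zero
  refine ⟨![0, 1, 3, 2], by decide, fun u => ?_⟩
  fin_cases u
  · exact ⟨1, norm_one, by simp [Gtetra2elt]⟩
  · exact ⟨_, norm_phase_mul_neg_phase _, X2_kronecker_X2_mulVec_ψEJM halfTurnX_mtet_zero⟩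
  · exact ⟨1, norm_one, by rw [one_smul]; exact hZ⟩
  · refine ⟨_, norm_phase_mul_neg_phase (bPhi (mtet 3)), ?_⟩
    change ((X2 * Z2) ⊗ₖ (X2 * Z2)) *ᵥ ψEJM 0 = _ • ψEJM 2
    rw [mul_kronecker_mul, ← mulVec_mulVec, hZ]
    exact X2_kronecker_X2_mulVec_ψEJM halfTurnX_mtet_three

end
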